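/- For all nonnegative integers n and all parameters alpha, beta, the sum over k from 0 to n of (alpha+beta+2k+1)(alpha+beta+1)_k / Gamma(alpha+beta+n+k+2) times P_k^{(alpha,beta)}(x) P_{n-k}^{(-n-alpha-1, -n-beta-1)}(y) equals (1/Gamma(alpha+beta+1)) (1/n!) ((x-y)/2)^n. -/

import Mathlib

noncomputable def poch (a : ℝ) (k : ℕ) : ℝ := ∏ m ∈ Finset.range k, (a + m)

noncomputable def lag (α : ℝ) (n : ℕ) (x : ℝ) : ℝ :=
  ∑ k ∈ Finset.range (n + 1),
    (-1) ^ k * (poch (α + k + 1) (n - k) / (n - k).factorial) * x ^ k / k.factorial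

noncomputable def jacobi (α β : ℝ) (n : ℕ) (x : ℝ) : ℝ :=
  ∑ k ∈ Finset.range (n + 1),
    poch ((n : ℝ) + α + β + 1) k * poch (α + k + 1) (n - k) /
      (k.factorial * (n - k).factorial) * ((x - 1) / 2) ^ k

noncomputable def charlier (a : ℝ) (n : ℕ) (x : ℝ) : ℝ :=
  ∑ m ∈ Finset.range (n + 1),
    (∏ j ∈ Finset.range m, (x - (j : ℝ))) / m.factorial * (-a) ^ (n - m) / (n - m).factorial
/-! Expand both Jacobi polynomials in powers of `u = (x - 1) / 2` and `v = (y - 1) / 2`. After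
multiplying by `Γ(α + β + 2n + 2)` and using the reflection `(a)_k = (-1)^k (1 - a - k)_k` on the
coefficients with negative parameters, the coefficient of `u^i v^j` becomes a product of Pochhammer
symbols times a finite sum over `k = i + t` that telescopes, and vanishes unless `i + j = n`.
The surviving diagonal terms assemble, by the binomial theorem, into
`(α + β + 1)_{2n+1} (u - v)^n / n!`, and `(α + β + 1)_{2n+1} / Γ(α + β + 2n + 2) = 1 / Γ(α + β + 1)`. -/

open Finset Nat

lemma poch_zero (a : ℝ) : poch a 0 = 1 := prod_range_zero _

lemma poch_succ (a : ℝ) (k : ℕ) : poch a (k + 1) = poch a k * (a + k) := prod_range_succ _ _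

lemma poch_add (a : ℝ) (m l : ℕ) : poch a (m + l) = poch a m * poch (a + m) l := by
  simp only [poch, prod_range_add, cast_add, add_assoc]

lemma poch_mul_poch {a b : ℝ} {m : ℕ} (h : b = a + m) (l : ℕ) :
    poch a m * poch b l = poch a (m + l) := by
  rw [h, poch_add]

lemma poch_succ' (a : ℝ) (k : ℕ) : poch a (k + 1) = a * poch (a + 1) k := by
  rw [add_comm k, poch_add, poch_succ, poch_zero]
  simp

lemma poch_eq_neg_one_pow_mul (a : ℝ) (k : ℕ) : poch a k = (-1) ^ k * poch (1 - a - k) k := by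
  rw [poch, poch, ← prod_range_reflect, ← card_range k, ← prod_const, card_range,
    ← prod_mul_distrib]
  refine prod_congr rfl fun m hm => ?_
  rw [cast_sub (by simp at hm; omega), cast_sub (by simp at hm; omega)]
  ring

-- `Real.Gamma` is `0` at its poles, so `(Real.Gamma x)⁻¹` is the entire function `1/Γ`.
lemma inv_Gamma_eq_poch_mul (x : ℝ) (k : ℕ) :
    (Real.Gamma x)⁻¹ = poch x k * (Real.Gamma (x + k))⁻¹ := by
  induction k with
  | zero => simp [poch_zero]
  | succ k ih =>
    have step : (Real.Gamma (x + k))⁻¹ = (x + k) * (Real.Gamma (x + k + 1))⁻¹ := by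
      rcases eq_or_ne (x + k) 0 with h | h
      · simp [h]
      · rw [Real.Gamma_add_one h, mul_inv, ← mul_assoc, mul_inv_cancel₀ h, one_mul]
    rw [ih, step, poch_succ, cast_succ, ← add_assoc, mul_assoc]

lemma sum_range_triangle_reindex {M : Type*} [AddCommMonoid M] (n : ℕ) (f : ℕ → ℕ → ℕ → M) :
    ∑ k ∈ range (n + 1), ∑ i ∈ range (k + 1), ∑ j ∈ range (n - k + 1), f k i j =
      ∑ i ∈ range (n + 1), ∑ j ∈ range (n - i + 1), ∑ t ∈ range (n - i - j + 1), f (i + t) i j := by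
  rw [sum_comm' (t' := range (n + 1)) (s' := fun i => Ico i (n + 1))
    fun k i => by simp only [mem_range, mem_Ico]; omega]
  refine sum_congr rfl fun i hi => ?_
  rw [mem_range] at hi
  rw [sum_Ico_eq_sum_range]
  exact sum_comm' fun t j => by simp only [mem_range]; omega

lemma add_pow_div_factorial {K : Type*} [Field K] [CharZero K] (a b : K) (n : ℕ) :
    (a + b) ^ n / n ! = ∑ i ∈ range (n + 1), a ^ i * b ^ (n - i) / (i ! * (n - i)!) := by
  rw [add_pow, sum_div]
  refine sum_congr rfl fun i hi => ?_
  rw [cast_choose K (by simp at hi; omega)]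
  have := factorial_ne_zero n
  field_simp

noncomputable def telescopingTerm (τ : ℝ) (N M t : ℕ) : ℝ :=
  (-1) ^ (N - t) * (τ + 2 * t + 1) * poch (τ + 1) t * poch (τ + N + 2 + t) (M - t) /
    (t ! * (N - t)!)

lemma sum_telescopingTerm (τ : ℝ) {N M : ℕ} (hNM : N ≤ M) :
    ∑ t ∈ range (N + 1), telescopingTerm τ N M t = if N = 0 then (τ + 1) * poch (τ + 2) M else 0 := by
  rcases eq_or_ne N 0 with rfl | hN
  · simp [telescopingTerm, poch_zero]
  rw [if_neg hN]
  have hN' : (N : ℝ) ≠ 0 := cast_ne_zero.mpr hN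
  -- an antidifference of `t ↦ telescopingTerm τ N M t`, vanishing at `t = 0`
  let H : ℕ → ℝ := fun t => -(-1) ^ (N - t) * (τ + t + N + 1) * poch (τ + 1) t *
    poch (τ + N + 2 + t) (M - t) * t / (N * t ! * (N - t)!)
  have step : ∀ t ∈ range N, telescopingTerm τ N M t = H (t + 1) - H t := by
    intro t ht
    obtain ⟨s, hs⟩ : ∃ s, N - t = s + 1 := ⟨N - t - 1, by simp at ht; omega⟩
    obtain ⟨r, hr⟩ : ∃ r, M - t = r + 1 := ⟨M - t - 1, by simp at ht; omega⟩
    have hs' : N - (t + 1) = s := by omega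
    have hr' : M - (t + 1) = r := by omega
    have hNts : (N : ℝ) = t + s + 1 := by exact_mod_cast (by omega : N = t + s + 1)
    simp only [telescopingTerm, H, hs, hr, hs', hr']
    rw [poch_succ' (τ + N + 2 + t), poch_succ (τ + 1) t]
    simp only [factorial_succ, cast_mul, cast_succ, hNts, add_assoc]
    have := factorial_ne_zero t
    have := factorial_ne_zero s
    field_simp
    ring
  have last : telescopingTerm τ N M N = -H N := by
    simp only [telescopingTerm, H, Nat.sub_self, factorial_zero, cast_one]
    field_simp
    ring
  rw [sum_range_succ, sum_congr rfl step, sum_range_sub, last]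
  simp [H]

noncomputable def jacobiCoeff (α β : ℝ) (n i : ℕ) : ℝ :=
  poch ((n : ℝ) + α + β + 1) i * poch (α + i + 1) (n - i) / (i ! * (n - i)!)

lemma jacobi_eq_sum_jacobiCoeff (α β : ℝ) (n : ℕ) (x : ℝ) :
    jacobi α β n x = ∑ i ∈ range (n + 1), jacobiCoeff α β n i * ((x - 1) / 2) ^ i := rfl

noncomputable def pairCoeff (α β : ℝ) (i j N : ℕ) : ℝ :=
  (-1) ^ j * poch (α + i + 1) N * poch (α + β + 1) (2 * i) / (i ! * j !)

lemma weighted_jacobi_term_eq (α β u v : ℝ) {n k i j t N : ℕ} (hk : k = i + t)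
    (hn : n = i + j + N) (ht : t ≤ N) :
    (α + β + 2 * k + 1) * poch (α + β + 1) k * poch (α + β + n + k + 2) (n - k) *
        (jacobiCoeff α β k i * u ^ i) *
        (jacobiCoeff (-(n : ℝ) - α - 1) (-(n : ℝ) - β - 1) (n - k) j * v ^ j) =
      u ^ i * v ^ j * pairCoeff α β i j N * telescopingTerm (α + β + 2 * i) N (N + 2 * j) t := by
  obtain ⟨s, rfl⟩ : ∃ s, N = t + s := ⟨N - t, by omega⟩
  subst hk hn
  have e1 : i + t - i = t := by omega
  have e2 : i + j + (t + s) - (i + t) = j + s := by omega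
  have e3 : j + s - j = s := by omega
  have e4 : t + s - t = s := by omega
  have e5 : t + s + 2 * j - t = s + 2 * j := by omega
  simp only [jacobiCoeff, pairCoeff, telescopingTerm, e1, e2, e3, e4, e5]
  push_cast
  have h1 : poch (α + β + 1) (i + t) * poch (↑i + ↑t + α + β + 1) i =
      poch (α + β + 1) (2 * i) * poch (α + β + 2 * ↑i + 1) t := by
    rw [poch_mul_poch (by push_cast; ring), poch_mul_poch (by push_cast; ring)]
    congr 1
    ring
  have h2 : poch (↑j + ↑s + (-(↑i + ↑j + (↑t + ↑s)) - α - 1) + (-(↑i + ↑j + (↑t + ↑s)) - β - 1) + 1)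
        j * poch (α + β + (↑i + ↑j + (↑t + ↑s)) + (↑i + ↑t) + 2) (j + s) =
      (-1) ^ j * poch (α + β + 2 * ↑i + (↑t + ↑s) + 2 + ↑t) (s + 2 * j) := by
    rw [poch_eq_neg_one_pow_mul _ j, mul_assoc, poch_mul_poch (by ring),
      show j + (j + s) = s + 2 * j by ring]
    congr 2
    ring
  have h3 : poch (α + ↑i + 1) t * poch (-(↑i + ↑j + (↑t + ↑s)) - α - 1 + ↑j + 1) s =
      (-1) ^ s * poch (α + ↑i + 1) (t + s) := by
    rw [poch_eq_neg_one_pow_mul _ s, mul_left_comm, poch_mul_poch (by ring)]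
  have h123 := congrArg₂ (· * ·) (congrArg₂ (· * ·) h1 h2) h3
  linear_combination (u ^ i * v ^ j * (α + β + 2 * (↑i + ↑t) + 1) / (i ! * t ! * j ! * s !)) *
    h123

lemma pairCoeff_zero_mul (α β : ℝ) (i j : ℕ) :
    pairCoeff α β i j 0 * ((α + β + 2 * i + 1) * poch (α + β + 2 * i + 2) (2 * j)) =
      (-1) ^ j * poch (α + β + 1) (2 * (i + j) + 1) / (i ! * j !) := by
  have hmerge :
      poch (α + β + 1) (2 * i) * ((α + β + 2 * i + 1) * poch (α + β + 2 * i + 2) (2 * j)) =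
        poch (α + β + 1) (2 * (i + j) + 1) := by
    rw [show α + β + 2 * i + 2 = α + β + 2 * i + 1 + 1 by ring, ← poch_succ',
      poch_mul_poch (by push_cast; ring)]
    congr 1
    ring
  rw [pairCoeff, poch_zero, ← hmerge]
  ring

lemma sum_weighted_jacobi_mul_jacobi (α β x y : ℝ) (n : ℕ) :
    ∑ k ∈ range (n + 1), (α + β + 2 * k + 1) * poch (α + β + 1) k *
        poch (α + β + n + k + 2) (n - k) * jacobi α β k x *
        jacobi (-(n : ℝ) - α - 1) (-(n : ℝ) - β - 1) (n - k) y =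
      poch (α + β + 1) (2 * n + 1) * ((x - y) / 2) ^ n / n ! := by
  set u := (x - 1) / 2
  set v := (y - 1) / 2
  simp only [jacobi_eq_sum_jacobiCoeff, mul_sum, sum_mul]
  rw [sum_congr rfl fun k _ => sum_comm, sum_range_triangle_reindex]
  have inner : ∀ i ∈ range (n + 1), ∀ j ∈ range (n - i + 1),
      ∑ t ∈ range (n - i - j + 1),
        (α + β + 2 * ((i + t : ℕ) : ℝ) + 1) * poch (α + β + 1) (i + t) *
          poch (α + β + n + ((i + t : ℕ) : ℝ) + 2) (n - (i + t)) *
          (jacobiCoeff α β (i + t) i * u ^ i) *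
          (jacobiCoeff (-(n : ℝ) - α - 1) (-(n : ℝ) - β - 1) (n - (i + t)) j * v ^ j) =
        if j = n - i then
          poch (α + β + 1) (2 * n + 1) * (u ^ i * (-v) ^ (n - i) / (i ! * (n - i)!))
        else 0 := by
    intro i hi j hj
    simp only [mem_range] at hi hj
    rw [sum_congr rfl fun t ht => weighted_jacobi_term_eq α β u v rfl
      (by omega : n = i + j + (n - i - j)) (by simp at ht; omega), ← mul_sum,
      sum_telescopingTerm _ (by omega)]
    by_cases hji : j = n - i
    · subst hji
      rw [if_pos (by omega), if_pos rfl, Nat.sub_self, zero_add, mul_assoc, pairCoeff_zero_mul,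
        show i + (n - i) = n by omega, neg_pow v]
      ring
    · rw [if_neg (by omega), if_neg hji, mul_zero]
  rw [sum_congr rfl fun i hi => (sum_congr rfl (inner i hi)).trans
    (sum_ite_eq' _ _ _ |>.trans (if_pos (by simp)))]
  rw [mul_div_assoc, show (x - y) / 2 = u + -v by ring, add_pow_div_factorial, mul_sum]

theorem stmt10 (α β x y : ℝ) (n : ℕ) :
    ∑ k ∈ Finset.range (n + 1),
      (α + β + 2 * k + 1) * poch (α + β + 1) k *
        (Real.Gamma (α + β + n + k + 2))⁻¹ * jacobi α β k x *
        jacobi (-(n : ℝ) - α - 1) (-(n : ℝ) - β - 1) (n - k) y =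
      (Real.Gamma (α + β + 1))⁻¹ * (1 / n.factorial) * ((x - y) / 2) ^ n := by
  have hGamma : ∀ k ∈ range (n + 1), (Real.Gamma (α + β + n + k + 2))⁻¹ =
      poch (α + β + n + k + 2) (n - k) * (Real.Gamma (α + β + 1 + (2 * n + 1 : ℕ)))⁻¹ :=
    fun k hk => by
      rw [inv_Gamma_eq_poch_mul _ (n - k)]
      congr 3
      push_cast [cast_sub (show k ≤ n by simp at hk; omega)]
      ring
  calc _ = (∑ k ∈ range (n + 1), (α + β + 2 * k + 1) * poch (α + β + 1) k *
          poch (α + β + n + k + 2) (n - k) * jacobi α β k x *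
          jacobi (-(n : ℝ) - α - 1) (-(n : ℝ) - β - 1) (n - k) y) *
        (Real.Gamma (α + β + 1 + (2 * n + 1 : ℕ)))⁻¹ := by
        rw [sum_mul]
        refine sum_congr rfl fun k hk => ?_
        rw [hGamma k hk]
        ring
    _ = _ := by
        rw [sum_weighted_jacobi_mul_jacobi, inv_Gamma_eq_poch_mul (α + β + 1) (2 * n + 1)]
        ring
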